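/- In the braid group B_4 with Artin generators σ1, σ2, σ3, the word σ3^{2a+2}·σ2·σ1·σ3·σ2·σ1·σ3·σ2·σ3^{2b+1}·σ1^{-1}·σ2^{-1}·σ1^{-2}·σ2^{-1}·σ1^{-1}·σ2^{-1} equals the word σ3^{2a+2}·σ2·σ3^{-1}·σ1^{2b+2}·σ2·σ1^{-1}·σ3·σ2^{-2}, for all natural numbers a, b. -/
import Mathlib


/-- The braid relations for the braid group `B₄` on generators `σ₁, σ₂, σ₃`
(indexed by `0, 1, 2`). -/
def braidRels4 : Set (FreeGroup (Fin 3)) :=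
  { FreeGroup.of 0 * FreeGroup.of 2 * (FreeGroup.of 2 * FreeGroup.of 0)⁻¹,
    FreeGroup.of 0 * FreeGroup.of 1 * FreeGroup.of 0 *
      (FreeGroup.of 1 * FreeGroup.of 0 * FreeGroup.of 1)⁻¹,
    FreeGroup.of 1 * FreeGroup.of 2 * FreeGroup.of 1 *
      (FreeGroup.of 2 * FreeGroup.of 1 * FreeGroup.of 2)⁻¹ }

/-- The braid group `B₄` on four strands, as a presented group. -/
abbrev B4 : Type := PresentedGroup braidRels4

/-- The Artin generators: `s 0 = σ₁`, `s 1 = σ₂`, `s 2 = σ₃`. -/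
def s (i : Fin 3) : B4 := PresentedGroup.of i


lemma rel_of_mem {r : FreeGroup (Fin 3)} (h : r ∈ braidRels4) :
    (QuotientGroup.mk r : B4) = 1 := by
  rw [QuotientGroup.eq_one_iff]
  exact Subgroup.subset_normalClosure h

lemma mk_of (i : Fin 3) : (QuotientGroup.mk (FreeGroup.of i) : B4) = s i := rfl

lemma r02 : s 0 * s 2 = s 2 * s 0 := by
  have h := rel_of_mem (r := FreeGroup.of 0 * FreeGroup.of 2 * (FreeGroup.of 2 * FreeGroup.of 0)⁻¹)
    (by simp [braidRels4])
  simp only [QuotientGroup.mk_mul, QuotientGroup.mk_inv, mk_of] at h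
  rwa [mul_inv_eq_one] at h

lemma r01 : s 0 * s 1 * s 0 = s 1 * s 0 * s 1 := by
  have h := rel_of_mem (r := FreeGroup.of 0 * FreeGroup.of 1 * FreeGroup.of 0 *
      (FreeGroup.of 1 * FreeGroup.of 0 * FreeGroup.of 1)⁻¹) (by simp [braidRels4])
  simp only [QuotientGroup.mk_mul, QuotientGroup.mk_inv, mk_of] at h
  rwa [mul_inv_eq_one] at h

lemma r12 : s 1 * s 2 * s 1 = s 2 * s 1 * s 2 := by
  have h := rel_of_mem (r := FreeGroup.of 1 * FreeGroup.of 2 * FreeGroup.of 1 *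
      (FreeGroup.of 2 * FreeGroup.of 1 * FreeGroup.of 2)⁻¹) (by simp [braidRels4])
  simp only [QuotientGroup.mk_mul, QuotientGroup.mk_inv, mk_of] at h
  rwa [mul_inv_eq_one] at h

lemma r01inv : (s 0)⁻¹ * (s 1)⁻¹ * (s 0)⁻¹ = (s 1)⁻¹ * (s 0)⁻¹ * (s 1)⁻¹ := by
  rw [show (s 0)⁻¹ * (s 1)⁻¹ * (s 0)⁻¹ = (s 0 * s 1 * s 0)⁻¹ by group, r01]; group

lemma r12conj : s 1 * s 2 * (s 1)⁻¹ = (s 2)⁻¹ * s 1 * s 2 := by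
  symm
  calc (s 2)⁻¹ * s 1 * s 2 = (s 2)⁻¹ * (s 1 * s 2 * s 1) * (s 1)⁻¹ := by group
    _ = (s 2)⁻¹ * (s 2 * s 1 * s 2) * (s 1)⁻¹ := by rw [r12]
    _ = s 1 * s 2 * (s 1)⁻¹ := by group

lemma hC : Commute (s 0) (s 2) := r02

lemma r02' : s 2 * (s 0)⁻¹ = (s 0)⁻¹ * s 2 := hC.inv_left.symm.eq

/-- The key `b`-free word identity. -/
lemma keyword :
    s 2 * (s 1 * s 0 * s 2 * s 1) *
      ((s 0)⁻¹ * (s 1)⁻¹ * (s 0)⁻¹ * (s 0)⁻¹ * (s 1)⁻¹ * (s 0)⁻¹ * (s 1)⁻¹) =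
    (s 2)⁻¹ * s 1 * (s 0)⁻¹ * s 2 * (s 1)⁻¹ * (s 1)⁻¹ := by
  calc s 2 * (s 1 * s 0 * s 2 * s 1) *
      ((s 0)⁻¹ * (s 1)⁻¹ * (s 0)⁻¹ * (s 0)⁻¹ * (s 1)⁻¹ * (s 0)⁻¹ * (s 1)⁻¹)
      = s 2 * s 1 * (s 0 * s 2) * (s 1 * (s 0)⁻¹ * (s 1)⁻¹ * (s 0)⁻¹ * (s 0)⁻¹ *
          (s 1)⁻¹ * (s 0)⁻¹ * (s 1)⁻¹) := by group
    _ = s 2 * s 1 * (s 2 * s 0) * (s 1 * (s 0)⁻¹ * (s 1)⁻¹ * (s 0)⁻¹ * (s 0)⁻¹ *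
          (s 1)⁻¹ * (s 0)⁻¹ * (s 1)⁻¹) := by rw [r02]
    _ = (s 2 * s 1 * s 2) * (s 0 * s 1 * ((s 0)⁻¹ * (s 1)⁻¹ * (s 0)⁻¹ * (s 0)⁻¹ *
          (s 1)⁻¹ * (s 0)⁻¹ * (s 1)⁻¹)) := by group
    _ = (s 1 * s 2 * s 1) * (s 0 * s 1 * ((s 0)⁻¹ * (s 1)⁻¹ * (s 0)⁻¹ * (s 0)⁻¹ *
          (s 1)⁻¹ * (s 0)⁻¹ * (s 1)⁻¹)) := by rw [r12]
    _ = s 1 * s 2 * (s 1 * s 0 * s 1) * ((s 0)⁻¹ * ((s 1)⁻¹ * (s 0)⁻¹ * (s 0)⁻¹ *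
          (s 1)⁻¹ * (s 0)⁻¹ * (s 1)⁻¹)) := by group
    _ = s 1 * s 2 * (s 0 * s 1 * s 0) * ((s 0)⁻¹ * ((s 1)⁻¹ * (s 0)⁻¹ * (s 0)⁻¹ *
          (s 1)⁻¹ * (s 0)⁻¹ * (s 1)⁻¹)) := by rw [r01]
    _ = s 1 * s 2 * ((s 0)⁻¹ * (s 1)⁻¹ * (s 0)⁻¹) * (s 1)⁻¹ := by group
    _ = s 1 * s 2 * ((s 1)⁻¹ * (s 0)⁻¹ * (s 1)⁻¹) * (s 1)⁻¹ := by rw [r01inv]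
    _ = (s 1 * s 2 * (s 1)⁻¹) * ((s 0)⁻¹ * ((s 1)⁻¹ * (s 1)⁻¹)) := by group
    _ = ((s 2)⁻¹ * s 1 * s 2) * ((s 0)⁻¹ * ((s 1)⁻¹ * (s 1)⁻¹)) := by rw [r12conj]
    _ = (s 2)⁻¹ * s 1 * (s 2 * (s 0)⁻¹) * ((s 1)⁻¹ * (s 1)⁻¹) := by group
    _ = (s 2)⁻¹ * s 1 * ((s 0)⁻¹ * s 2) * ((s 1)⁻¹ * (s 1)⁻¹) := by rw [r02']
    _ = (s 2)⁻¹ * s 1 * (s 0)⁻¹ * s 2 * (s 1)⁻¹ * (s 1)⁻¹ := by group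

lemma uconj : (s 1 * s 0 * s 2 * s 1) * s 2 * (s 1 * s 0 * s 2 * s 1)⁻¹ = s 0 := by
  calc (s 1 * s 0 * s 2 * s 1) * s 2 * (s 1 * s 0 * s 2 * s 1)⁻¹
      = s 1 * s 0 * (s 2 * s 1 * s 2) * ((s 1)⁻¹ * ((s 2)⁻¹ * ((s 0)⁻¹ * (s 1)⁻¹))) := by group
    _ = s 1 * s 0 * (s 1 * s 2 * s 1) * ((s 1)⁻¹ * ((s 2)⁻¹ * ((s 0)⁻¹ * (s 1)⁻¹))) := by
        rw [r12]
    _ = (s 1 * s 0 * s 1) * ((s 0)⁻¹ * (s 1)⁻¹) := by group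
    _ = (s 0 * s 1 * s 0) * ((s 0)⁻¹ * (s 1)⁻¹) := by rw [r01]
    _ = s 0 := by group

lemma uconj_pow (n : ℕ) :
    (s 1 * s 0 * s 2 * s 1) * (s 2) ^ n = (s 0) ^ n * (s 1 * s 0 * s 2 * s 1) := by
  have h : (s 0) ^ n = (s 1 * s 0 * s 2 * s 1) * (s 2) ^ n * (s 1 * s 0 * s 2 * s 1)⁻¹ := by
    rw [← conj_pow, uconj]
  rw [h]; group

/-- In `B₄`, the word
`σ₃^{2a+2} σ₂ σ₁ σ₃ σ₂ σ₁ σ₃ σ₂ σ₃^{2b+1} σ₁⁻¹ σ₂⁻¹ σ₁⁻² σ₂⁻¹ σ₁⁻¹ σ₂⁻¹`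
equals `σ₃^{2a+2} σ₂ σ₃⁻¹ σ₁^{2b+2} σ₂ σ₁⁻¹ σ₃ σ₂⁻²`. -/
theorem braid_word_identity (a b : ℕ) :
    (s 2) ^ (2 * a + 2) * s 1 * s 0 * s 2 * s 1 * s 0 * s 2 * s 1 * (s 2) ^ (2 * b + 1) *
      (s 0)⁻¹ * (s 1)⁻¹ * ((s 0) ^ 2)⁻¹ * (s 1)⁻¹ * (s 0)⁻¹ * (s 1)⁻¹ =
    (s 2) ^ (2 * a + 2) * s 1 * (s 2)⁻¹ * (s 0) ^ (2 * b + 2) * s 1 * (s 0)⁻¹ * s 2 *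
      ((s 1) ^ 2)⁻¹ := by
  have hk : Commute (s 2) ((s 0) ^ (2 * b + 1)) := hC.symm.pow_right _
  have hk2 : Commute ((s 2)⁻¹) ((s 0) ^ (2 * b + 2)) := (hC.symm.inv_left).pow_right _
  calc (s 2) ^ (2 * a + 2) * s 1 * s 0 * s 2 * s 1 * s 0 * s 2 * s 1 * (s 2) ^ (2 * b + 1) *
      (s 0)⁻¹ * (s 1)⁻¹ * ((s 0) ^ 2)⁻¹ * (s 1)⁻¹ * (s 0)⁻¹ * (s 1)⁻¹
      = (s 2) ^ (2 * a + 2) * s 1 * s 0 * s 2 *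
          ((s 1 * s 0 * s 2 * s 1) * (s 2) ^ (2 * b + 1)) *
          ((s 0)⁻¹ * (s 1)⁻¹ * (s 0)⁻¹ * (s 0)⁻¹ * (s 1)⁻¹ * (s 0)⁻¹ * (s 1)⁻¹) := by group
    _ = (s 2) ^ (2 * a + 2) * s 1 * s 0 * s 2 *
          ((s 0) ^ (2 * b + 1) * (s 1 * s 0 * s 2 * s 1)) *
          ((s 0)⁻¹ * (s 1)⁻¹ * (s 0)⁻¹ * (s 0)⁻¹ * (s 1)⁻¹ * (s 0)⁻¹ * (s 1)⁻¹) := by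
        rw [uconj_pow]
    _ = (s 2) ^ (2 * a + 2) * s 1 * s 0 * (s 2 * (s 0) ^ (2 * b + 1)) *
          ((s 1 * s 0 * s 2 * s 1) *
            ((s 0)⁻¹ * (s 1)⁻¹ * (s 0)⁻¹ * (s 0)⁻¹ * (s 1)⁻¹ * (s 0)⁻¹ * (s 1)⁻¹)) := by group
    _ = (s 2) ^ (2 * a + 2) * s 1 * s 0 * ((s 0) ^ (2 * b + 1) * s 2) *
          ((s 1 * s 0 * s 2 * s 1) *
            ((s 0)⁻¹ * (s 1)⁻¹ * (s 0)⁻¹ * (s 0)⁻¹ * (s 1)⁻¹ * (s 0)⁻¹ * (s 1)⁻¹)) := by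
        rw [hk.eq]
    _ = (s 2) ^ (2 * a + 2) * s 1 * (s 0) ^ (2 * b + 2) *
          (s 2 * (s 1 * s 0 * s 2 * s 1) *
            ((s 0)⁻¹ * (s 1)⁻¹ * (s 0)⁻¹ * (s 0)⁻¹ * (s 1)⁻¹ * (s 0)⁻¹ * (s 1)⁻¹)) := by group
    _ = (s 2) ^ (2 * a + 2) * s 1 * (s 0) ^ (2 * b + 2) *
          ((s 2)⁻¹ * s 1 * (s 0)⁻¹ * s 2 * (s 1)⁻¹ * (s 1)⁻¹) := by rw [keyword]
    _ = (s 2) ^ (2 * a + 2) * s 1 * ((s 0) ^ (2 * b + 2) * (s 2)⁻¹) *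
          (s 1 * (s 0)⁻¹ * s 2 * (s 1)⁻¹ * (s 1)⁻¹) := by group
    _ = (s 2) ^ (2 * a + 2) * s 1 * ((s 2)⁻¹ * (s 0) ^ (2 * b + 2)) *
          (s 1 * (s 0)⁻¹ * s 2 * (s 1)⁻¹ * (s 1)⁻¹) := by rw [hk2.eq]
    _ = (s 2) ^ (2 * a + 2) * s 1 * (s 2)⁻¹ * (s 0) ^ (2 * b + 2) * s 1 * (s 0)⁻¹ * s 2 *
          ((s 1) ^ 2)⁻¹ := by group
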